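/- arXiv:1702.03101 — 2 statements merged into one kernel-verified Lean document; each statement's English description precedes it below -/
import Mathlib

section
/- If a scheduled Boolean automata network (F', W') on n+k automata id-simulates (F, [V]) where F: B^n → B^n and [V] is the parallel update schedule on V = {0,...,n-1}, then k ≥ ⌈log₂(χ(G_NECC(F,W)))⌉, where G_NECC(F,W) is the graph on vertex set B^n with edges between pairs (x,x') such that F(x) ≠ F(x') and there exists i with F_{W_{<i}}(x) = F_{W_{<i}}(x'). -/
/-- A configuration of a Boolean automata network of size `n`. -/
abbrev Conf (n : ℕ) := Fin n → Bool

/-- `F_I`: update simultaneously exactly the automata in `I`. -/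
def updSet {n : ℕ} (F : Conf n → Conf n) (I : Finset (Fin n)) (x : Conf n) : Conf n :=
  fun i => if i ∈ I then F x i else x i

/-- `W_{<j}`: union of the first `j` blocks of the schedule `W`. -/
def prefUnion {n : ℕ} (W : List (Finset (Fin n))) (j : ℕ) : Finset (Fin n) :=
  (W.take j).foldr (· ∪ ·) ∅

/-- `W` is a block-sequential update schedule: an ordered partition of the automata. -/
def isSchedule {n : ℕ} (W : List (Finset (Fin n))) : Prop :=
  (∀ B ∈ W, B.Nonempty) ∧ W.Pairwise Disjoint ∧ W.foldr (· ∪ ·) ∅ = Finset.univ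

/-- Confusable configurations: identical after updating the first `i` blocks, some `i ∈ [0,p]`. -/
def confusable {n : ℕ} (F : Conf n → Conf n) (W : List (Finset (Fin n))) (x x' : Conf n) : Prop :=
  ∃ i ≤ W.length, updSet F (prefUnion W i) x = updSet F (prefUnion W i) x'

/-- `CC(x,x')`: the set of steps making `x` and `x'` confusable. -/
def CCset {n : ℕ} (F : Conf n → Conf n) (W : List (Finset (Fin n))) (x x' : Conf n) : Set ℕ :=
  {i | i ≤ W.length ∧ updSet F (prefUnion W i) x = updSet F (prefUnion W i) x'}

/-- The `G_NECC` graph: edges between non-equivalent confusable configurations. -/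
def gnecc {n : ℕ} (F : Conf n → Conf n) (W : List (Finset (Fin n))) :
    SimpleGraph (Conf n) where
  Adj x x' := F x ≠ F x' ∧ confusable F W x x'
  symm := ⟨by
    rintro x x' ⟨hne, i, hi, h⟩
    exact ⟨hne.symm, i, hi, h.symm⟩⟩
  loopless := ⟨by rintro x ⟨hne, _⟩; exact hne rfl⟩

/-- `F^W`: apply the blocks of `W` sequentially. -/
def runSched {n : ℕ} (F : Conf n → Conf n) (W : List (Finset (Fin n))) (x : Conf n) : Conf n :=
  W.foldl (fun y B => updSet F B y) x

/-- `W(i)`: the index of the block of `W` containing `i`. -/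
def stepOf {n : ℕ} (W : List (Finset (Fin n))) (i : Fin n) : ℕ :=
  W.findIdx (fun B => decide (i ∈ B))

/-- `W' ∈ E_h(W,V')`: `W'` extends `W`, preserving the update order via `h`. -/
def extendsSched {n m : ℕ} (W : List (Finset (Fin n))) (W' : List (Finset (Fin m)))
    (h : Fin n → Fin m) : Prop :=
  ∀ i i' : Fin n, (stepOf W i ≤ stepOf W i' ↔ stepOf W' (h i) ≤ stepOf W' (h i'))

/-- `(F',W')` `h`-simulates `(F,[V])`: `φ_h ∘ F'^{W'} = F ∘ φ_h`. -/
def simulates {n m : ℕ} (F' : Conf m → Conf m) (W' : List (Finset (Fin m)))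
    (F : Conf n → Conf n) (h : Fin n → Fin m) : Prop :=
  ∀ z : Conf m, (fun i => runSched F' W' z (h i)) = F (fun i => z (h i))

/-- `κ(F,W)`: minimal number of additional automata needed to simulate `(F,[V])`
with a schedule extending `W` order-preservingly. -/
noncomputable def kappa {n : ℕ} (F : Conf n → Conf n) (W : List (Finset (Fin n))) : ℕ :=
  sInf {k | ∃ h : Fin n → Fin (n + k), Function.Injective h ∧
    ∃ W' : List (Finset (Fin (n + k))), isSchedule W' ∧ extendsSched W W' h ∧
      ∃ F' : Conf (n + k) → Conf (n + k), simulates F' W' F h}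

/-- The simple sequential update schedule `({0},{1},…,{n-1})`. -/
def seqSched (n : ℕ) : List (Finset (Fin n)) := (List.finRange n).map (fun i => {i})

/-!
Run the simulating network from `x` padded with `false` on the `k` extra automata and colour `x`
by the final state of those extra automata; this uses `2 ^ k` colours. The colouring is proper:
if `x` and `x'` are confusable at step `i`, order preservation yields a step `t` of `W'` before
which exactly the images of `W_{<i}` have been updated. At that moment the original automata hold
`F_{W_{<i}}(x) = F_{W_{<i}}(x')`, while each extra automaton, updated at most once, holds either
`false` or its final value. Equal colours thus make the two runs coincide from step `t` on, and the
simulation gives `F x = F x'`.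
-/

lemma mem_foldr_union_iff {α : Type*} [DecidableEq α] {L : List (Finset α)} {a : α} :
    a ∈ L.foldr (· ∪ ·) ∅ ↔ ∃ B ∈ L, a ∈ B := by
  induction L with
  | nil => simp
  | cons B L ih => simp [ih]

section Schedules

variable {m : ℕ}

lemma exists_mem_take_iff_stepOf_lt {L : List (Finset (Fin m))} {t : ℕ} {a : Fin m} :
    (∃ B ∈ L.take t, a ∈ B) ↔ stepOf L a < min t L.length := by
  have hle : stepOf L a ≤ L.length := List.findIdx_le_length
  have := List.findIdx_lt_length (p := fun B => decide (a ∈ B)) (xs := L.take t)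
  simp only [decide_eq_true_eq, List.findIdx_take, List.length_take] at this
  rw [← this, stepOf]
  omega

lemma mem_prefUnion_iff {W : List (Finset (Fin m))} {i : ℕ} (hi : i ≤ W.length) {a : Fin m} :
    a ∈ prefUnion W i ↔ stepOf W a < i := by
  rw [prefUnion, mem_foldr_union_iff, exists_mem_take_iff_stepOf_lt, min_eq_left hi]

lemma not_mem_of_mem_drop_of_stepOf_lt {L : List (Finset (Fin m))} (hL : L.Pairwise Disjoint)
    {t : ℕ} {a : Fin m} (ha : stepOf L a < t) : ∀ B ∈ L.drop t, a ∉ B := by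
  intro B hB haB
  have hlen : stepOf L a < L.length :=
    List.findIdx_lt_length.mpr ⟨B, List.mem_of_mem_drop hB, by simpa using haB⟩
  obtain ⟨B', hB', haB'⟩ := exists_mem_take_iff_stepOf_lt.mpr (lt_min ha hlen)
  rw [← List.take_append_drop t L, List.pairwise_append] at hL
  exact Finset.disjoint_left.mp (hL.2.2 B' hB' B hB) haB' haB

variable (F : Conf m → Conf m)

lemma runSched_append (L₁ L₂ : List (Finset (Fin m))) (z : Conf m) :
    runSched F (L₁ ++ L₂) z = runSched F L₂ (runSched F L₁ z) :=
  List.foldl_append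

lemma runSched_apply_of_forall_not_mem {L : List (Finset (Fin m))} {a : Fin m}
    (ha : ∀ B ∈ L, a ∉ B) (z : Conf m) : runSched F L z a = z a := by
  induction L generalizing z with
  | nil => rfl
  | cons B L ih =>
    rw [← List.singleton_append, runSched_append, ih (fun B' hB' => ha B' (by simp [hB']))]
    simp [runSched, updSet, ha B (by simp)]

lemma runSched_take_apply {L : List (Finset (Fin m))} (hL : L.Pairwise Disjoint) (t : ℕ)
    (z : Conf m) (a : Fin m) :
    runSched F (L.take t) z a = if stepOf L a < t then runSched F L z a else z a := by
  split_ifs with ha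
  · conv_rhs => rw [← List.take_append_drop t L, runSched_append]
    exact (runSched_apply_of_forall_not_mem F (not_mem_of_mem_drop_of_stepOf_lt hL ha) _).symm
  · refine runSched_apply_of_forall_not_mem F (fun B hB haB => ha ?_) z
    exact (exists_mem_take_iff_stepOf_lt.mp ⟨B, hB, haB⟩).trans_le (min_le_left _ _)

end Schedules

lemma extendsSched.exists_threshold {n m : ℕ} {W : List (Finset (Fin n))}
    {W' : List (Finset (Fin m))} {h : Fin n → Fin m} (hext : extendsSched W W' h) (i : ℕ) :
    ∃ t, ∀ j, stepOf W j < i ↔ stepOf W' (h j) < t := by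
  refine ⟨(Finset.univ.filter fun j => stepOf W j < i).sup fun j => stepOf W' (h j) + 1,
    fun j => ⟨fun hj => ?_, fun hj => ?_⟩⟩
  · exact Nat.lt_of_succ_le (Finset.le_sup (f := fun j => stepOf W' (h j) + 1) (by simpa))
  · obtain ⟨j', hj', hjj'⟩ := Finset.lt_sup_iff.mp hj
    simp only [Finset.mem_filter, Finset.mem_univ, true_and] at hj'
    exact ((hext j j').mpr (Nat.lt_succ_iff.mp hjj')).trans_lt hj'

def hiddenState {n k : ℕ} (F' : Conf (n + k) → Conf (n + k))
    (W' : List (Finset (Fin (n + k)))) (x : Conf n) : Fin k → Bool :=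
  fun ℓ => runSched F' W' (Fin.append x fun _ => false) (Fin.natAdd n ℓ)

section Simulation

variable {n k : ℕ} {F : Conf n → Conf n} {F' : Conf (n + k) → Conf (n + k)}
  {W' : List (Finset (Fin (n + k)))}

lemma simulates.runSched_append_castAdd (hsim : simulates F' W' F (Fin.castAdd k))
    (x : Conf n) (v : Fin k → Bool) (j : Fin n) :
    runSched F' W' (Fin.append x v) (Fin.castAdd k j) = F x j := by
  have hx : (fun i => Fin.append x v (Fin.castAdd k i)) = x := funext (Fin.append_left x v)
  simpa only [hx] using congrFun (hsim (Fin.append x v)) j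

lemma runSched_take_append_castAdd (hW' : W'.Pairwise Disjoint)
    (hsim : simulates F' W' F (Fin.castAdd k)) {t : ℕ} {P : Finset (Fin n)}
    (hP : ∀ j, j ∈ P ↔ stepOf W' (Fin.castAdd k j) < t) (x : Conf n) (v : Fin k → Bool) :
    (fun j => runSched F' (W'.take t) (Fin.append x v) (Fin.castAdd k j)) = updSet F P x := by
  funext j
  simp only [runSched_take_apply F' hW', updSet, hP, hsim.runSched_append_castAdd,
    Fin.append_left]

lemma eq_of_confusable_of_hiddenState_eq {W : List (Finset (Fin n))}
    (hW' : W'.Pairwise Disjoint) (hext : extendsSched W W' (Fin.castAdd k))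
    (hsim : simulates F' W' F (Fin.castAdd k))
    {x x' : Conf n} (hconf : confusable F W x x')
    (hstate : hiddenState F' W' x = hiddenState F' W' x') : F x = F x' := by
  obtain ⟨i, hi, hupd⟩ := hconf
  obtain ⟨t, ht⟩ := hext.exists_threshold i
  have hP : ∀ j, j ∈ prefUnion W i ↔ stepOf W' (Fin.castAdd k j) < t :=
    fun j => (mem_prefUnion_iff hi).trans (ht j)
  set pad : Conf n → Conf (n + k) := fun y => Fin.append y fun _ => false
  have hprefix : runSched F' (W'.take t) (pad x) = runSched F' (W'.take t) (pad x') := by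
    funext a
    induction a using Fin.addCases with
    | left j =>
      have hx := runSched_take_append_castAdd hW' hsim hP x fun _ => false
      have hx' := runSched_take_append_castAdd hW' hsim hP x' fun _ => false
      exact congrFun (hx.trans (hupd.trans hx'.symm)) j
    | right ℓ =>
      simp only [runSched_take_apply F' hW']
      split_ifs
      · exact congrFun hstate ℓ
      · simp only [pad, Fin.append_right]
  have hrun : runSched F' W' (pad x) = runSched F' W' (pad x') := by
    rw [← List.take_append_drop t W', runSched_append, runSched_append, hprefix]
  funext j
  rw [← hsim.runSched_append_castAdd x, ← hsim.runSched_append_castAdd x']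
  exact congrFun hrun (Fin.castAdd k j)

end Simulation

lemma SimpleGraph.Coloring.clog_chromaticNumber_le {V : Type*} {G : SimpleGraph V} {k : ℕ}
    (C : G.Coloring (Fin k → Bool)) : Nat.clog 2 G.chromaticNumber.toNat ≤ k := by
  have hχ : G.chromaticNumber ≤ (2 ^ k : ℕ) := by
    simpa using C.colorable.chromaticNumber_le
  calc Nat.clog 2 G.chromaticNumber.toNat
      ≤ Nat.clog 2 (2 ^ k) :=
        Nat.clog_mono_right 2 <|
          (ENat.toNat_le_toNat hχ (ENat.natCast_ne_top _)).trans_eq (ENat.toNat_natCast _)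
    _ = k := Nat.clog_pow 2 k one_lt_two

theorem stmt0_general {n k : ℕ} (F : Conf n → Conf n) (W : List (Finset (Fin n)))
    (F' : Conf (n + k) → Conf (n + k)) (W' : List (Finset (Fin (n + k))))
    (hW' : isSchedule W') (hext : extendsSched W W' (Fin.castAdd k))
    (hsim : simulates F' W' F (Fin.castAdd k)) :
    Nat.clog 2 ((gnecc F W).chromaticNumber.toNat) ≤ k :=
  SimpleGraph.Coloring.clog_chromaticNumber_le <| .mk (hiddenState F' W') fun hadj hstate =>
    hadj.1 (eq_of_confusable_of_hiddenState_eq hW'.2.1 hext hsim hadj.2 hstate)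

theorem stmt0 {n k : ℕ} (F : Conf n → Conf n) (W : List (Finset (Fin n)))
    (hW : isSchedule W)
    (F' : Conf (n + k) → Conf (n + k)) (W' : List (Finset (Fin (n + k))))
    (hW' : isSchedule W') (hext : extendsSched W W' (Fin.castAdd k))
    (hsim : simulates F' W' F (Fin.castAdd k)) :
    Nat.clog 2 ((gnecc F W).chromaticNumber.toNat) ≤ k :=
  stmt0_general F W F' W' hW' hext hsim
end

section
/- If X ⊆ B^n is a clique of the NECC graph of (F,W), then there exists a single step i ∈ [0,p] such that for all x, x' ∈ X, F_{W_{<i}}(x) = F_{W_{<i}}(x') (i.e., i ∈ CC(x,x') for all pairs in X). -/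
/-! `updSet F (prefUnion W i) x = updSet F (prefUnion W i) y` splits into two conditions:
`x` and `y` agree outside the first `i` blocks, a family of equivalence relations increasing in
`i`, and `F x` and `F y` agree on the first `i` blocks, a family decreasing in `i`. Hence every
`CC(x, y)` is an interval. Let `i` be the least step at which the first relation holds on all
of `X`. If `i = m + 1`, some `u, v ∈ X` are not related at step `m`, and by transitivity every
`x ∈ X` is unrelated at step `m` to `u` or to `v`; since `CC(x, u)` resp. `CC(x, v)` is then
confined to steps `> m`, `F x` agrees with `F u` on the first `i` blocks. -/

open Set

theorem exists_forall_of_monotone_of_antitone {α : Type*} {P Q : ℕ → α → α → Prop}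
    (hP : ∀ i, Equivalence (P i)) (hQ : ∀ i, Equivalence (Q i))
    (hPmono : Monotone P) (hQanti : Antitone Q) {X : Set α} {N : ℕ}
    (hN : ∀ x ∈ X, ∀ y ∈ X, P N x y)
    (hPQ : ∀ x ∈ X, ∀ y ∈ X, ∃ j, P j x y ∧ Q j x y) :
    ∃ i ≤ N, ∀ x ∈ X, ∀ y ∈ X, P i x y ∧ Q i x y := by
  classical
  have hex : ∃ i, ∀ x ∈ X, ∀ y ∈ X, P i x y := ⟨N, hN⟩
  refine ⟨Nat.find hex, Nat.find_min' hex hN, fun x hx y hy =>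
    ⟨Nat.find_spec hex x hx y hy, ?_⟩⟩
  suffices hub : ∃ u, ∀ z ∈ X, Q (Nat.find hex) z u from
    let ⟨u, hu⟩ := hub
    (hQ _).trans (hu x hx) ((hQ _).symm (hu y hy))
  have Q_succ_of_not_P : ∀ {m}, ∀ z ∈ X, ∀ w ∈ X, ¬ P m z w → Q (m + 1) z w := by
    intro m z hz w hw hzw
    obtain ⟨j, hPj, hQj⟩ := hPQ z hz w hw
    have hmj : m < j := lt_of_not_ge fun hjm => hzw (hPmono hjm _ _ hPj)
    exact hQanti hmj _ _ hQj
  rcases h : Nat.find hex with _ | m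
  · exact ⟨x, fun z hz => let ⟨j, _, hQj⟩ := hPQ z hz x hx; hQanti (Nat.zero_le j) _ _ hQj⟩
  · obtain ⟨u, hu, v, hv, huv⟩ : ∃ u ∈ X, ∃ v ∈ X, ¬ P m u v := by
      have := Nat.find_min hex (show m < Nat.find hex by omega)
      push Not at this
      exact this
    refine ⟨u, fun z hz => ?_⟩
    by_cases hzu : P m z u
    · have hzv : ¬ P m z v := fun hzv => huv ((hP m).trans ((hP m).symm hzu) hzv)
      exact (hQ _).trans (Q_succ_of_not_P z hz v hv hzv)
        ((hQ _).symm (Q_succ_of_not_P u hu v hv huv))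
    · exact Q_succ_of_not_P z hz u hu hzu

theorem updSet_eq_updSet_iff {n : ℕ} (F : Conf n → Conf n) (S : Finset (Fin n)) (x y : Conf n) :
    updSet F S x = updSet F S y ↔ EqOn x y (↑S)ᶜ ∧ EqOn (F x) (F y) ↑S := by
  constructor
  · intro h
    refine ⟨fun k hk => ?_, fun k hk => ?_⟩
    · simpa [updSet, show k ∉ S from hk] using congrFun h k
    · simpa [updSet, show k ∈ S from hk] using congrFun h k
  · rintro ⟨hout, hin⟩
    funext k
    by_cases hk : k ∈ S
    · simp [updSet, hk, hin (Finset.mem_coe.2 hk)]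
    · simp [updSet, hk, hout (Finset.mem_coe.not.2 hk)]

theorem mem_foldr_union {α : Type*} [DecidableEq α] {l : List (Finset α)} {a : α} :
    a ∈ l.foldr (· ∪ ·) ∅ ↔ ∃ B ∈ l, a ∈ B := by
  induction l with
  | nil => simp
  | cons B l ih => simp [ih]

theorem prefUnion_mono {n : ℕ} (W : List (Finset (Fin n))) : Monotone (prefUnion W) := by
  intro i j hij k hk
  rw [prefUnion, mem_foldr_union] at hk ⊢
  obtain ⟨B, hB, hkB⟩ := hk
  exact ⟨B, (List.take_isPrefix_take.2 (Or.inl hij)).subset hB, hkB⟩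

theorem prefUnion_length {n : ℕ} {W : List (Finset (Fin n))} (hW : isSchedule W) :
    prefUnion W W.length = Finset.univ := by
  rw [prefUnion, List.take_length]
  exact hW.2.2

theorem stmt12 {n : ℕ} (F : Conf n → Conf n) (W : List (Finset (Fin n)))
    (hW : isSchedule W) (X : Set (Conf n)) (hX : (gnecc F W).IsClique X) :
    ∃ i ≤ W.length, ∀ x ∈ X, ∀ x' ∈ X,
      updSet F (prefUnion W i) x = updSet F (prefUnion W i) x' := by
  have hN : ∀ x y : Conf n, EqOn x y (↑(prefUnion W W.length))ᶜ := by
    simp only [prefUnion_length hW, Finset.coe_univ, compl_univ, eqOn_empty, implies_true]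
  have hPQ : ∀ x ∈ X, ∀ y ∈ X, ∃ j, EqOn x y (↑(prefUnion W j))ᶜ ∧
      EqOn (F x) (F y) ↑(prefUnion W j) := by
    intro x hx y hy
    rcases eq_or_ne x y with rfl | hxy
    · exact ⟨0, eqOn_refl _ _, eqOn_refl _ _⟩
    · obtain ⟨j, -, hj⟩ := (hX hx hy hxy).2
      exact ⟨j, (updSet_eq_updSet_iff F _ x y).1 hj⟩
  obtain ⟨i, hi, h⟩ := exists_forall_of_monotone_of_antitone
    (P := fun j x y => EqOn x y (↑(prefUnion W j))ᶜ)
    (Q := fun j x y => EqOn (F x) (F y) ↑(prefUnion W j))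
    (fun _ => ⟨fun _ => eqOn_refl _ _, EqOn.symm, EqOn.trans⟩)
    (fun _ => ⟨fun _ => eqOn_refl _ _, EqOn.symm, EqOn.trans⟩)
    (fun _ _ hij _ _ h =>
      h.mono (compl_subset_compl.2 (Finset.coe_subset.2 (prefUnion_mono W hij))))
    (fun _ _ hij _ _ h => h.mono (Finset.coe_subset.2 (prefUnion_mono W hij)))
    (fun x _ y _ => hN x y) hPQ
  exact ⟨i, hi, fun x hx y hy => (updSet_eq_updSet_iff F _ x y).2 (h x hx y hy)⟩
end
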